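/- Every nontrivial element of PL(I, ∂I) is undistorted: if g ∈ PL(I, ∂I) with g ≠ id, and S is a nonempty finite subset of PL(I, ∂I), then there exists a real constant c > 0 such that for every positive integer n, whenever g^n is written as a composition of k factors each of which belongs to S or is the inverse of an element of S, one has k ≥ c·n. -/

import Mathlib

/-!
A nontrivial `g` has a fixed point `q` (the largest fixed point below a point that `g` moves)
to the right of which `g` is `t ↦ q + a (t - q)` with `a ≠ 1`, so `gⁿ` and `g⁻ⁿ` stretch a
short interval `[q, q + δ]` by the factors `aⁿ` and `a⁻ⁿ`. A PL homeomorphism has finitely many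
slopes, all positive, so by the mean value inequality for right derivatives it is bi-Lipschitz.
Hence a word of length `k` in `S ∪ S⁻¹` is `Mᵏ`-Lipschitz together with its inverse, which forces
`n |log a| ≤ k log M`.
-/

open Set

namespace Stmt

lemma negOne_mem_I : (-1 : ℝ) ∈ Set.Icc (-1 : ℝ) 1 := by norm_num
lemma one_mem_I : (1 : ℝ) ∈ Set.Icc (-1 : ℝ) 1 := by norm_num

/-- A bijection of `I = [-1,1]` is piecewise affine if there are finitely many points
`-1 = x₀ < x₁ < ⋯ < x_k = 1` such that it is affine on each `[x_{i-1}, x_i]`. -/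
def IsPL (f : Equiv.Perm (Set.Icc (-1 : ℝ) 1)) : Prop :=
  ∃ (k : ℕ) (x : Fin (k + 1) → ℝ), StrictMono x ∧ x 0 = -1 ∧ x (Fin.last k) = 1 ∧
    ∀ i : Fin k, ∃ a b : ℝ, ∀ t : (Set.Icc (-1 : ℝ) 1),
      x i.castSucc ≤ (t : ℝ) → (t : ℝ) ≤ x i.succ → ((f t : ℝ)) = a * (t : ℝ) + b

/-- Membership in `PL(I, ∂I)`: a homeomorphism of `I = [-1,1]` onto itself fixing the
endpoints `-1` and `1` which is piecewise affine. -/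
def IsPLHomeo (f : Equiv.Perm (Set.Icc (-1 : ℝ) 1)) : Prop :=
  Continuous f ∧ Continuous f.symm ∧
    f ⟨-1, negOne_mem_I⟩ = ⟨-1, negOne_mem_I⟩ ∧ f ⟨1, one_mem_I⟩ = ⟨1, one_mem_I⟩ ∧ IsPL f

/-- The breakpoints of `f`: points of `(-1,1)` at which `f` is not locally affine. -/
def breakpoints (f : Equiv.Perm (Set.Icc (-1 : ℝ) 1)) : Set ℝ :=
  {t | t ∈ Set.Ioo (-1 : ℝ) 1 ∧ ¬ ∃ (a b ε : ℝ), 0 < ε ∧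
    ∀ s : (Set.Icc (-1 : ℝ) 1), |(s : ℝ) - t| < ε → ((f s : ℝ)) = a * (s : ℝ) + b}

/-- `Δ(f)` is the number of breakpoints of `f` plus one. -/
noncomputable def Δ (f : Equiv.Perm (Set.Icc (-1 : ℝ) 1)) : ℕ :=
  (breakpoints f).ncard + 1

open scoped NNReal

abbrev I : Set ℝ := Set.Icc (-1 : ℝ) 1

instance : Fact ((-1 : ℝ) ≤ 1) := ⟨by norm_num⟩

lemma exists_castSucc_le_lt_succ {α : Type*} [LinearOrder α] :
    ∀ {k : ℕ} (x : Fin (k + 1) → α) {t : α}, x 0 ≤ t → t < x (Fin.last k) →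
      ∃ i : Fin k, x i.castSucc ≤ t ∧ t < x i.succ
  | 0, _, _, h0, hk => absurd h0 (not_le.2 hk)
  | k + 1, x, t, h0, hk => by
    by_cases ht : t < x (Fin.last k).castSucc
    · obtain ⟨i, hi⟩ := exists_castSucc_le_lt_succ (fun j => x j.castSucc) h0 ht
      exact ⟨i.castSucc, hi⟩
    · exact ⟨Fin.last k, not_lt.1 ht, hk⟩

lemma IsPL.exists_right_slopes {f : Equiv.Perm I} (hf : IsPL f) :
    ∃ A : Finset ℝ, ∀ t : I, (t : ℝ) < 1 → ∃ a ∈ A, ∃ ε > 0, (t : ℝ) + ε ≤ 1 ∧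
      ∀ s : I, t ≤ s → (s : ℝ) ≤ t + ε → (f s : ℝ) = f t + a * (s - t) := by
  obtain ⟨k, x, hx, hx0, hxk, hpiece⟩ := hf
  choose a b hab using hpiece
  refine ⟨Finset.univ.image a, fun t ht => ?_⟩
  obtain ⟨i, hti, hit⟩ := exists_castSucc_le_lt_succ x (hx0 ▸ t.2.1) (hxk ▸ ht)
  refine ⟨a i, Finset.mem_image_of_mem _ (Finset.mem_univ i), x i.succ - t, by linarith,
    by linarith [hxk ▸ hx.monotone (Fin.le_last i.succ)], fun s hts hs => ?_⟩
  rw [hab i s (hti.trans hts) (by linarith), hab i t hti hit.le]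
  ring

lemma IsPLHomeo.strictMono {f : Equiv.Perm I} (hf : IsPLHomeo f) : StrictMono f :=
  hf.1.strictMono_of_inj_boundedOrder (by
    show f ⟨-1, negOne_mem_I⟩ ≤ f ⟨1, one_mem_I⟩
    rw [hf.2.2.1, hf.2.2.2.1, Subtype.mk_le_mk]
    norm_num) f.injective

lemma IsPLHomeo.exists_pos_right_slopes {f : Equiv.Perm I} (hf : IsPLHomeo f) :
    ∃ A : Finset ℝ, (∀ a ∈ A, 0 < a) ∧ ∀ t : I, (t : ℝ) < 1 → ∃ a ∈ A, ∃ ε > 0,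
      (t : ℝ) + ε ≤ 1 ∧ ∀ s : I, t ≤ s → (s : ℝ) ≤ t + ε → (f s : ℝ) = f t + a * (s - t) := by
  obtain ⟨A, hA⟩ := hf.2.2.2.2.exists_right_slopes
  refine ⟨A.filter (0 < ·), fun a ha => (Finset.mem_filter.1 ha).2, fun t ht => ?_⟩
  obtain ⟨a, ha, ε, hε, htε, hfa⟩ := hA t ht
  set s : I := ⟨t + ε, by linarith [t.2.1], htε⟩
  have hts : t < s := Subtype.mk_lt_mk.2 (by linarith)
  have hfs := hfa s hts.le le_rfl
  have hmono : (f t : ℝ) < f s := hf.strictMono hts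
  have hapos : 0 < a := by
    rw [hfs] at hmono
    exact pos_of_mul_pos_left (by simpa [s] using hmono) hε.le
  exact ⟨a, Finset.mem_filter.2 ⟨ha, hapos⟩, ε, hε, htε, hfa⟩

lemma mul_sub_le_sub_le_mul_sub {φ : ℝ → ℝ} {u v m M : ℝ} (huv : u ≤ v)
    (hφ : ContinuousOn φ (Icc u v))
    (hd : ∀ t ∈ Ico u v, ∃ a ∈ Icc m M, HasDerivWithinAt φ a (Ici t) t) :
    m * (v - u) ≤ φ v - φ u ∧ φ v - φ u ≤ M * (v - u) := by
  choose! φ' hφ'mem hφ' using hd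
  have hline (c t : ℝ) : HasDerivWithinAt (fun s => φ u + c * (s - u)) c (Ici t) t := by
    simpa using (((hasDerivAt_id t).sub_const u).const_mul c).const_add (φ u) |>.hasDerivWithinAt
  have hcont (c : ℝ) : ContinuousOn (fun s => φ u + c * (s - u)) (Icc u v) := by fun_prop
  have hv : v ∈ Icc u v := right_mem_Icc.2 huv
  constructor
  · have := image_le_of_deriv_right_le_deriv_boundary (hcont m) (fun t _ => hline m t)
      (by simp) hφ hφ' (fun t ht => (hφ'mem t ht).1) hv
    linarith
  · have := image_le_of_deriv_right_le_deriv_boundary hφ hφ' (by simp) (hcont M)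
      (fun t _ => hline M t) (fun t ht => (hφ'mem t ht).2) hv
    linarith

lemma IsPLHomeo.exists_sub_bounds {f : Equiv.Perm I} (hf : IsPLHomeo f) :
    ∃ K : ℝ, 0 < K ∧ ∀ u v : I, u ≤ v →
      K⁻¹ * (v - u) ≤ (f v : ℝ) - f u ∧ (f v : ℝ) - f u ≤ K * (v - u) := by
  obtain ⟨A, hApos, hA⟩ := hf.exists_pos_right_slopes
  obtain ⟨K₀, hK₀⟩ := (A.image fun a => max a a⁻¹).exists_le
  set K := max K₀ 1
  have hK : 0 < K := lt_max_of_lt_right one_pos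
  have hslope : ∀ a ∈ A, a ∈ Icc K⁻¹ K := fun a ha => by
    have hmax := (hK₀ _ (Finset.mem_image_of_mem _ ha)).trans (le_max_left K₀ 1)
    exact ⟨inv_le_of_inv_le₀ (hApos a ha) ((le_max_right _ _).trans hmax),
      (le_max_left _ _).trans hmax⟩
  set φ : ℝ → ℝ := IccExtend Fact.out fun t => (f t : ℝ)
  have hφ (t : I) : φ t = f t := IccExtend_val _ _ t
  refine ⟨K, hK, fun u v huv => ?_⟩
  rw [← hφ u, ← hφ v]
  refine mul_sub_le_sub_le_mul_sub huv
    (continuous_IccExtend_iff.2 (continuous_subtype_val.comp hf.1)).continuousOn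
    fun t ht => ?_
  have htI : t ∈ I := ⟨u.2.1.trans ht.1, ht.2.le.trans v.2.2⟩
  obtain ⟨a, ha, ε, hε, htε, hfa⟩ := hA ⟨t, htI⟩ (ht.2.trans_le v.2.2)
  refine ⟨a, hslope a ha, ?_⟩
  have hline : HasDerivWithinAt (fun s => φ t + a * (s - t)) a (Ici t) t := by
    simpa using (((hasDerivAt_id t).sub_const t).const_mul a).const_add (φ t) |>.hasDerivWithinAt
  refine hline.congr_of_eventuallyEq ?_ (by simp)
  filter_upwards [Icc_mem_nhdsGE (show t < t + ε by linarith)] with s hs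
  have hsI : s ∈ I := ⟨htI.1.trans hs.1, hs.2.trans htε⟩
  simp only [φ, IccExtend_of_mem _ _ hsI, IccExtend_of_mem _ _ htI]
  exact hfa ⟨s, hsI⟩ hs.1 hs.2

lemma IsPLHomeo.exists_lipschitzWith {f : Equiv.Perm I} (hf : IsPLHomeo f) :
    ∃ K : ℝ≥0, LipschitzWith K f ∧ LipschitzWith K ⇑f⁻¹ := by
  obtain ⟨K, hK, hbounds⟩ := hf.exists_sub_bounds
  have hdist : ∀ u v : I, dist (f u) (f v) ≤ K * dist u v ∧ dist u v ≤ K * dist (f u) (f v) := by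
    intro u v
    wlog huv : u ≤ v generalizing u v
    · simpa only [dist_comm] using this v u (le_of_not_ge huv)
    obtain ⟨hlow, hup⟩ := hbounds u v huv
    have huv' : 0 ≤ (v : ℝ) - u := sub_nonneg.2 huv
    have hfuv : 0 ≤ (f v : ℝ) - f u := (mul_nonneg (inv_nonneg.2 hK.le) huv').trans hlow
    simp only [Subtype.dist_eq, Real.dist_eq, abs_sub_comm (u : ℝ), abs_sub_comm (f u : ℝ),
      abs_of_nonneg huv', abs_of_nonneg hfuv]
    refine ⟨hup, ?_⟩
    rw [← inv_mul_le_iff₀ hK]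
    exact hlow
  refine ⟨K.toNNReal, LipschitzWith.of_dist_le_mul fun u v => ?_,
    LipschitzWith.of_dist_le_mul fun u v => ?_⟩
  · rw [Real.coe_toNNReal _ hK.le]
    exact (hdist u v).1
  · rw [Real.coe_toNNReal _ hK.le]
    simpa using (hdist (f⁻¹ u) (f⁻¹ v)).2

lemma IsPLHomeo.exists_fixedPoint_slope_ne_one {g : Equiv.Perm I} (hg : IsPLHomeo g)
    (hne : g ≠ 1) :
    ∃ q : I, ∃ a ε : ℝ, 0 < a ∧ a ≠ 1 ∧ 0 < ε ∧ (q : ℝ) + ε ≤ 1 ∧ g q = q ∧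
      ∀ s : I, q ≤ s → (s : ℝ) ≤ q + ε → (g s : ℝ) = q + a * (s - q) := by
  obtain ⟨x, hx⟩ : ∃ x, g x ≠ x := by
    by_contra! h
    exact hne (Equiv.ext h)
  obtain ⟨q, ⟨hqx, hgq⟩, hq_max⟩ : ∃ q, IsGreatest (Iic x ∩ {t | g t = t}) q :=
    (isClosed_Iic.inter (isClosed_eq hg.1 continuous_id)).isCompact.exists_isGreatest
      ⟨⊥, mem_Iic.2 bot_le, hg.2.2.1⟩
  have hqx' : q < x := lt_of_le_of_ne hqx (by rintro rfl; exact hx hgq)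
  obtain ⟨A, hApos, hA⟩ := hg.exists_pos_right_slopes
  obtain ⟨a, haA, ε, hε, hqε, hga⟩ := hA q ((Subtype.coe_lt_coe.2 hqx').trans_le x.2.2)
  set δ := min ε (x - q)
  have hδ : 0 < δ := lt_min hε (sub_pos.2 hqx')
  have hδε : δ ≤ ε := min_le_left _ _
  have hgq' (s : I) (h₁ : q ≤ s) (h₂ : (s : ℝ) ≤ q + δ) : (g s : ℝ) = q + a * (s - q) := by
    rw [hga s h₁ (by linarith), hgq]
  refine ⟨q, a, δ, hApos a haA, ?_, hδ, by linarith, hgq, hgq'⟩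
  rintro rfl
  set y : I := ⟨q + δ, by linarith [q.2.1], by linarith⟩
  have hqy : q < y := Subtype.mk_lt_mk.2 (lt_add_of_pos_right _ hδ)
  have hgy : g y = y := Subtype.ext (by rw [hgq' y hqy.le le_rfl]; simp [y])
  have hyx : y ≤ x := Subtype.mk_le_mk.2 (by linarith [min_le_right ε ((x : ℝ) - q)])
  exact (hq_max ⟨hyx, hgy⟩).not_gt hqy

lemma pow_apply_eq_of_affine {g : Equiv.Perm I} {q : I} {a ε δ : ℝ} (ha : 0 < a) (hδ : 0 ≤ δ)
    (hg : ∀ s : I, q ≤ s → (s : ℝ) ≤ q + ε → (g s : ℝ) = q + a * (s - q))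
    {v : I} (hv : (v : ℝ) = q + δ) :
    ∀ n : ℕ, (∀ m < n, a ^ m * δ ≤ ε) → ((g ^ n) v : ℝ) = q + a ^ n * δ
  | 0, _ => by simp [hv]
  | n + 1, hn => by
    have ih := pow_apply_eq_of_affine ha hδ hg hv n fun m hm => hn m (by omega)
    have hq : q ≤ (g ^ n) v := by
      rw [← Subtype.coe_le_coe, ih]
      exact le_add_of_nonneg_right (by positivity)
    rw [pow_succ', Equiv.Perm.mul_apply, hg _ hq (by linarith [hn n n.lt_succ_self]), ih]
    ring

lemma lipschitzWith_list_prod {α : Type*} [PseudoEMetricSpace α] {K : ℝ≥0}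
    {l : List (Equiv.Perm α)} (h : ∀ f ∈ l, LipschitzWith K f) :
    LipschitzWith (K ^ l.length) l.prod := by
  induction l with
  | nil => simpa using LipschitzWith.id
  | cons f l ih =>
    simp only [List.prod_cons, Equiv.Perm.coe_mul, List.length_cons, pow_succ']
    exact (h f (by simp)).comp (ih fun x hx => h x (by simp [hx]))

lemma lipschitzWith_list_prod_inv {α : Type*} [PseudoEMetricSpace α] {K : ℝ≥0}
    {l : List (Equiv.Perm α)} (h : ∀ f ∈ l, LipschitzWith K ⇑f⁻¹) :
    LipschitzWith (K ^ l.length) ⇑l.prod⁻¹ := by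
  have := lipschitzWith_list_prod (K := K) (l := (l.map (·⁻¹)).reverse) (by
    simp only [List.mem_reverse, List.mem_map]
    rintro _ ⟨f, hf, rfl⟩
    exact h f hf)
  rwa [List.length_reverse, List.length_map, ← List.prod_inv_reverse] at this

lemma abs_log_le_log_of_lipschitzWith {α : Type*} [PseudoMetricSpace α] {f : Equiv.Perm α}
    {K : ℝ≥0} (hf : LipschitzWith K f) (hf' : LipschitzWith K ⇑f⁻¹) {u v : α}
    (huv : 0 < dist u v) {r : ℝ} (hr : 0 < r) (h : dist (f u) (f v) = r * dist u v) :
    |Real.log r| ≤ Real.log K := by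
  have hrK : r ≤ K := le_of_mul_le_mul_right (h ▸ hf.dist_le_mul u v) huv
  have hrK' : r⁻¹ ≤ K := by
    have := hf'.dist_le_mul (f u) (f v)
    rw [Equiv.Perm.coe_inv, Equiv.symm_apply_apply, Equiv.symm_apply_apply, h, ← mul_assoc] at this
    exact (inv_le_iff_one_le_mul₀ hr).2 (le_of_mul_le_mul_right (by simpa using this) huv)
  rw [abs_le, neg_le, ← Real.log_inv]
  exact ⟨Real.log_le_log (inv_pos.2 hr) hrK', Real.log_le_log hr hrK⟩

lemma exists_dist_pow_apply_eq_mul {g : Equiv.Perm I} {q : I} {a ε : ℝ} (ha : 0 < a)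
    (hε : 0 < ε) (hqε : (q : ℝ) + ε ≤ 1) (hgq : g q = q)
    (hg : ∀ s : I, q ≤ s → (s : ℝ) ≤ q + ε → (g s : ℝ) = q + a * (s - q)) (n : ℕ) :
    ∃ v : I, 0 < dist q v ∧ dist ((g ^ n) q) ((g ^ n) v) = a ^ n * dist q v := by
  -- small enough that the first `n` iterates of `q + δ` stay in `[q, q + ε]`
  set δ := ε / max a 1 ^ n
  have hpow : 1 ≤ max a 1 ^ n := one_le_pow₀ (le_max_right _ _)
  have hδ : 0 < δ := div_pos hε (by positivity)
  have horbit : ∀ m < n, a ^ m * δ ≤ ε := fun m hm => by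
    rw [mul_div_assoc', div_le_iff₀ (by positivity), mul_comm ε]
    gcongr
    calc a ^ m ≤ max a 1 ^ m := by gcongr; exact le_max_left _ _
      _ ≤ max a 1 ^ n := pow_le_pow_right₀ (le_max_right _ _) hm.le
  set v : I := ⟨q + δ, by linarith [q.2.1], by linarith [div_le_self hε.le hpow]⟩
  have hgv := pow_apply_eq_of_affine ha hδ.le hg (v := v) rfl n horbit
  refine ⟨v, by simpa [v, Subtype.dist_eq, Real.dist_eq] using hδ.ne', ?_⟩
  simp only [Equiv.Perm.pow_apply_eq_self_of_apply_eq_self hgq, Subtype.dist_eq, Real.dist_eq,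
    hgv, v]
  rw [show (q : ℝ) - (q + a ^ n * δ) = a ^ n * (q - (q + δ)) by ring, abs_mul,
    abs_of_pos (pow_pos ha n)]

lemma exists_lipschitzWith_of_mem_or_inv_mem {α : Type*} [PseudoEMetricSpace α]
    {S : Finset (Equiv.Perm α)}
    (hS : ∀ s ∈ S, ∃ K : ℝ≥0, LipschitzWith K s ∧ LipschitzWith K ⇑s⁻¹) :
    ∃ M : ℝ≥0, 1 < M ∧ ∀ s, s ∈ S ∨ s⁻¹ ∈ S → LipschitzWith M s := by
  choose! K hK using hS
  refine ⟨max (S.sup K) 2, by simp, ?_⟩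
  rintro s (hs | hs)
  · exact (hK s hs).1.weaken ((Finset.le_sup hs).trans (le_max_left _ _))
  · simpa using (hK _ hs).2.weaken ((Finset.le_sup hs).trans (le_max_left _ _))

theorem pl_undistorted_general (g : Equiv.Perm (Set.Icc (-1 : ℝ) 1)) (hg : Stmt.IsPLHomeo g)
    (hne : g ≠ 1) (S : Finset (Equiv.Perm (Set.Icc (-1 : ℝ) 1)))
    (hSPL : ∀ s ∈ S, Stmt.IsPLHomeo s) :
    ∃ c : ℝ, 0 < c ∧ ∀ n : ℕ, 0 < n → ∀ l : List (Equiv.Perm (Set.Icc (-1 : ℝ) 1)),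
      (∀ x ∈ l, x ∈ S ∨ x⁻¹ ∈ S) → g ^ n = l.prod → c * n ≤ l.length := by
  obtain ⟨q, a, ε, ha, ha1, hε, hqε, hgq, hga⟩ := hg.exists_fixedPoint_slope_ne_one hne
  obtain ⟨M, hM, hletter⟩ :=
    exists_lipschitzWith_of_mem_or_inv_mem fun s hs => (hSPL s hs).exists_lipschitzWith
  replace hM : (1 : ℝ) < M := hM
  refine ⟨|Real.log a| / Real.log M,
    div_pos (abs_pos.2 (Real.log_ne_zero_of_pos_of_ne_one ha ha1)) (Real.log_pos hM),
    fun n _ l hl hgl => ?_⟩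
  obtain ⟨v, hqv, hstretch⟩ := exists_dist_pow_apply_eq_mul ha hε hqε hgq hga n
  have hlog := abs_log_le_log_of_lipschitzWith
    (hgl ▸ lipschitzWith_list_prod fun s hs => hletter s (hl s hs))
    (hgl ▸ lipschitzWith_list_prod_inv fun s hs => hletter _ ((hl s hs).symm.imp_right (by simp)))
    hqv (pow_pos ha n) hstretch
  rw [NNReal.coe_pow, Real.log_pow, Real.log_pow, abs_mul, Nat.abs_cast] at hlog
  rw [div_mul_eq_mul_div, div_le_iff₀ (Real.log_pos hM), mul_comm]
  exact hlog

/-- Every nontrivial element of `PL(I,∂I)` is undistorted: for `g ≠ 1` in `PL(I,∂I)` and any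
nonempty finite subset `S` of `PL(I,∂I)` there is `c > 0` such that any expression of `gⁿ`
as a product of `k` factors from `S` or inverses of elements of `S` has `k ≥ c·n`. -/
theorem pl_undistorted (g : Equiv.Perm (Set.Icc (-1 : ℝ) 1)) (hg : Stmt.IsPLHomeo g)
    (hne : g ≠ 1) (S : Finset (Equiv.Perm (Set.Icc (-1 : ℝ) 1))) (hS : S.Nonempty)
    (hSPL : ∀ s ∈ S, Stmt.IsPLHomeo s) :
    ∃ c : ℝ, 0 < c ∧ ∀ n : ℕ, 0 < n → ∀ l : List (Equiv.Perm (Set.Icc (-1 : ℝ) 1)),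
      (∀ x ∈ l, x ∈ S ∨ x⁻¹ ∈ S) → g ^ n = l.prod → c * n ≤ l.length :=
  pl_undistorted_general g hg hne S hSPL

end Stmt
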